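/- Consider the planar polynomial vector field X₁(x₁,x₂) = (-x₁ + x₁x₂, -x₂) (which admits no polynomial Lyapunov function) and the non-polynomial function V₁(x₁,x₂) = ½·log(1 + x₁²) + ½·x₂². Then V₁ is a smooth, strict and proper Lyapunov function certifying that the origin is globally asymptotically stable under X₁: (a) V₁(0,0) = 0 and V₁(x) > 0 for x ≠ 0; (b) V₁ is radially unbounded, i.e., V₁(x) → +∞ as ‖x‖ → +∞; and (c) the Lie derivative is strictly negative away from the origin: ⟨∇V₁(x), X₁(x)⟩ = x₁²·(x₂ - 1)/(1 + x₁²) - x₂² < 0 for every (x₁,x₂) ≠ (0,0). -/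
import Mathlib


open Filter

/-- The polynomial vector field `X₁(x₁,x₂) = (-x₁ + x₁x₂, -x₂)`. -/
def X1 (p : ℝ × ℝ) : ℝ × ℝ := (-p.1 + p.1 * p.2, -p.2)

/-- The non-polynomial Lyapunov function `V₁(x₁,x₂) = ½ log(1+x₁²) + ½ x₂²`. -/
noncomputable def V1 (p : ℝ × ℝ) : ℝ :=
  (1/2) * Real.log (1 + p.1^2) + (1/2) * p.2^2

lemma one_add_sq_pos (x : ℝ) : (0:ℝ) < 1 + x^2 := by positivity

lemma hasFDerivV1 (p : ℝ × ℝ) :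
    HasFDerivAt V1 ((p.1/(1+p.1^2)) • (ContinuousLinearMap.fst ℝ ℝ ℝ)
      + p.2 • (ContinuousLinearMap.snd ℝ ℝ ℝ)) p := by
  have h1 : HasDerivAt (fun x : ℝ => (1/2) * Real.log (1 + x^2))
      (p.1/(1+p.1^2)) p.1 := by
    have hx : HasDerivAt (fun x : ℝ => 1 + x^2) (2 * p.1) p.1 := by
      simpa using (hasDerivAt_pow 2 p.1).const_add 1
    have h := (hx.log (one_add_sq_pos p.1).ne').const_mul (1/2 : ℝ)
    have heq : p.1/(1+p.1^2) = (1/2 : ℝ) * (2 * p.1 / (1 + p.1^2)) := by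
      field_simp
    rw [heq]
    exact h
  have h2 : HasDerivAt (fun y : ℝ => (1/2) * y^2) p.2 p.2 := by
    have := (hasDerivAt_pow 2 p.2).const_mul (1/2 : ℝ)
    simpa using this
  have HA := h1.comp_hasFDerivAt p
    (hasFDerivAt_fst : HasFDerivAt Prod.fst (ContinuousLinearMap.fst ℝ ℝ ℝ) p)
  have HB := h2.comp_hasFDerivAt p
    (hasFDerivAt_snd : HasFDerivAt Prod.snd (ContinuousLinearMap.snd ℝ ℝ ℝ) p)
  exact HA.add HB

theorem V1_is_smooth_strict_proper_Lyapunov_function_for_X1 :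
    ContDiff ℝ (⊤ : ℕ∞) V1 ∧
    V1 (0, 0) = 0 ∧
    (∀ p : ℝ × ℝ, p ≠ 0 → 0 < V1 p) ∧
    Tendsto V1 (cocompact (ℝ × ℝ)) atTop ∧
    (∀ p : ℝ × ℝ, p ≠ 0 →
      fderiv ℝ V1 p (X1 p) = p.1^2 * (p.2 - 1) / (1 + p.1^2) - p.2^2 ∧
      fderiv ℝ V1 p (X1 p) < 0) := by
  refine ⟨?_, ?_, ?_, ?_, ?_⟩
  · -- smooth
    have h1 : ContDiff ℝ (⊤ : ℕ∞) (fun p : ℝ × ℝ => (1:ℝ) + p.1^2) :=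
      contDiff_const.add (contDiff_fst.pow 2)
    have h2 : ContDiff ℝ (⊤ : ℕ∞) (fun p : ℝ × ℝ => Real.log (1 + p.1^2)) :=
      h1.log (fun p => (one_add_sq_pos p.1).ne')
    exact (contDiff_const.mul h2).add (contDiff_const.mul (contDiff_snd.pow 2))
  · simp [V1]
  · intro p hp
    have hlog : 0 ≤ Real.log (1 + p.1^2) := Real.log_nonneg (by nlinarith [sq_nonneg p.1])
    have h : p.1 ≠ 0 ∨ p.2 ≠ 0 := by
      by_contra hc
      push_neg at hc
      exact hp (Prod.ext hc.1 hc.2)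
    by_cases h1 : p.1 = 0
    · have h2 : p.2 ≠ 0 := by tauto
      have : 0 < p.2^2 := by positivity
      unfold V1; nlinarith
    · have hx2 : 0 < p.1^2 := by positivity
      have : 0 < Real.log (1 + p.1^2) := Real.log_pos (by nlinarith)
      unfold V1; nlinarith [sq_nonneg p.2]
  · -- proper
    rw [tendsto_atTop]
    intro b
    rw [Filter.eventually_iff, Filter.mem_cocompact]
    refine ⟨Metric.closedBall 0 (max (Real.exp b) (Real.sqrt (2*b) + 1)),
      isCompact_closedBall _ _, ?_⟩
    intro p hp
    simp only [Set.mem_compl_iff, Metric.mem_closedBall, dist_zero_right, not_le] at hp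
    have hnorm : ‖p‖ = max ‖p.1‖ ‖p.2‖ := rfl
    have hlog : 0 ≤ Real.log (1 + p.1^2) := Real.log_nonneg (by nlinarith [sq_nonneg p.1])
    have hy : 0 ≤ p.2^2 := sq_nonneg _
    simp only [Set.mem_setOf_eq]
    rcases max_cases ‖p.1‖ ‖p.2‖ with ⟨he, _⟩ | ⟨he, _⟩
    · -- ‖p‖ = |p.1|
      have h1 : Real.exp b < ‖p.1‖ := by
        calc Real.exp b ≤ _ := le_max_left _ _
        _ < ‖p.1‖ := by rw [hnorm, he] at hp; exact hp
      have h2 : Real.exp (2*b) ≤ 1 + p.1^2 := by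
        have := Real.exp_pos b
        have h3 : Real.exp b * Real.exp b ≤ ‖p.1‖ * ‖p.1‖ :=
          mul_le_mul h1.le h1.le this.le (norm_nonneg _)
        rw [← Real.exp_add] at h3
        rw [two_mul]
        have : ‖p.1‖ * ‖p.1‖ = p.1^2 := by rw [Real.norm_eq_abs]; rw [← abs_mul, abs_mul_self]; ring
        nlinarith
      have h4 : 2*b ≤ Real.log (1 + p.1^2) := by
        rw [← Real.log_exp (2*b)]
        exact Real.log_le_log (Real.exp_pos _) h2
      unfold V1; nlinarith
    · have h1 : Real.sqrt (2*b) + 1 < ‖p.2‖ := by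
        calc Real.sqrt (2*b) + 1 ≤ _ := le_max_right _ _
        _ < ‖p.2‖ := by rw [hnorm, he] at hp; exact hp
      have h2 : 2*b ≤ p.2^2 := by
        have habs : ‖p.2‖^2 = p.2^2 := sq_abs p.2
        by_cases hb : 0 ≤ 2*b
        · have hs := Real.sq_sqrt hb
          have hs2 := Real.sqrt_nonneg (2*b)
          nlinarith
        · push_neg at hb
          nlinarith [sq_nonneg p.2]
      unfold V1; nlinarith
  · intro p hp
    have H := (hasFDerivV1 p).fderiv
    rw [H]
    have hpos := one_add_sq_pos p.1
    have key : (p.1/(1+p.1^2)) * (-p.1 + p.1 * p.2) + p.2 * (-p.2)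
        = p.1^2 * (p.2 - 1) / (1 + p.1^2) - p.2^2 := by
      field_simp; ring
    constructor
    · simp [X1, ContinuousLinearMap.fst, ContinuousLinearMap.snd]
      rw [← key]; ring
    · have hne : ¬(p.1 = 0 ∧ p.2 = 0) := by simpa [Prod.ext_iff] using hp
      have hnum : p.1^2 * (p.2 - 1) - p.2^2 * (1 + p.1^2) < 0 := by
        by_cases h1 : p.1 = 0
        · have h2 : p.2 ≠ 0 := by tauto
          have : 0 < p.2^2 := by positivity
          rw [h1]; nlinarith
        · have : 0 < p.1^2 := by positivity
          nlinarith [sq_nonneg (p.2 - 1/2), sq_nonneg p.2, mul_pos this (show (0:ℝ) < p.2^2 - p.2 + 1 by nlinarith [sq_nonneg (p.2-1/2), sq_nonneg (2*p.2-1)])]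
      simp only [X1, ContinuousLinearMap.add_apply, ContinuousLinearMap.smul_apply,
        ContinuousLinearMap.coe_fst', ContinuousLinearMap.coe_snd', smul_eq_mul]
      calc (p.1/(1+p.1^2)) * (-p.1 + p.1 * p.2) + p.2 * (-p.2)
          = p.1^2 * (p.2 - 1) / (1 + p.1^2) - p.2^2 := key
        _ = (p.1^2 * (p.2 - 1) - p.2^2 * (1 + p.1^2)) / (1 + p.1^2) := by field_simp
        _ < 0 := div_neg_of_neg_of_pos hnum hpos
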